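/- arXiv:1810.09604 — 9 statements merged into one kernel-verified Lean document; each statement's English description precedes it below -/
import Mathlib

section
/- (Corollary 5.8: dividing implies shearing, for the linear-order context.) Let M be a structure in a first-order language L, A a set of elements of M, and φ(x̄; ā) a formula with parameter tuple ā from M which divides over A. Then for every finite set I₀ ⊆ ℚ and every t ∈ ℚ ∖ I₀, setting I₁ = I₀ ∪ {t}, the formula φ(x̄; ā) (I₀, I₁)-shears over A for the context of the linear order ℚ. -/
/- Corollary 5.8 of "Shearing in some simple theories":
dividing implies shearing, for the linear-order context (ℚ, <). -/

open FirstOrder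

universe u v w

/-- A family `b` of `ℓ`-tuples from `N`, indexed by `ℚ`, is order-indiscernible over the
set `A ⊆ N`: increasing index tuples of the same length give tuples satisfying the same
formulas with parameters from `A`. -/
def OrderIndiscernibleOver (L : FirstOrder.Language.{u, v}) (N : Type w) [L.Structure N]
    (A : Set N) (ℓ : ℕ) (b : ℚ → Fin ℓ → N) : Prop :=
  ∀ (m k : ℕ) (ψ : L.Formula ((Fin m × Fin ℓ) ⊕ Fin k)) (e : Fin k → N),
    (∀ i, e i ∈ A) →
    ∀ q q' : Fin m → ℚ, StrictMono q → StrictMono q' →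
      (ψ.Realize (Sum.elim (fun p => b (q p.1) p.2) e) ↔
        ψ.Realize (Sum.elim (fun p => b (q' p.1) p.2) e))

/-- Body of the dividing condition, with the elementary extension `N` made explicit. -/
def DividesBody (L : FirstOrder.Language.{u, v}) (M : Type w) [L.Structure M] (A : Set M)
    (nx ℓ : ℕ) (φ : L.Formula (Fin nx ⊕ Fin ℓ)) (a : Fin ℓ → M) (k : ℕ)
    (N : Type w) [L.Structure N] : Prop :=
  ∃ (f : M ↪ₑ[L] N) (b : ℚ → Fin ℓ → N) (q₀ : ℚ),
    OrderIndiscernibleOver L N (⇑f '' A) ℓ b ∧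
    b q₀ = ⇑f ∘ a ∧
    ∀ q : Fin k → ℚ, Function.Injective q →
      ¬ ∃ x : Fin nx → N, ∀ i : Fin k, φ.Realize (Sum.elim x (b (q i)))

/-- The formula `φ(x̄; ā)` divides over `A`: there are `k < ω`, an elementary extension
`N` of `M` and a ℚ-indexed family of `ℓ`-tuples, order-indiscernible over `A`, containing
`ā`, along which `φ` is `k`-inconsistent. -/
def Divides (L : FirstOrder.Language.{u, v}) (M : Type w) [iM : L.Structure M] (A : Set M)
    (nx ℓ : ℕ) (φ : L.Formula (Fin nx ⊕ Fin ℓ)) (a : Fin ℓ → M) : Prop :=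
  ∃ (k : ℕ) (N : Type w) (iN : L.Structure N),
    @DividesBody L M iM A nx ℓ φ a k N iN

/-- Two finite tuples of rationals (given as lists) have the same quantifier-free type
over the finite set `I₀ ⊆ ℚ`. -/
def SameQfType (I₀ : Finset ℚ) (t t' : List ℚ) : Prop :=
  t.length = t'.length ∧
  (∀ (i j : ℕ) (hi : i < t.length) (hj : j < t.length)
      (hi' : i < t'.length) (hj' : j < t'.length),
      (t.get ⟨i, hi⟩ < t.get ⟨j, hj⟩ ↔ t'.get ⟨i, hi'⟩ < t'.get ⟨j, hj'⟩) ∧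
      (t.get ⟨i, hi⟩ = t.get ⟨j, hj⟩ ↔ t'.get ⟨i, hi'⟩ = t'.get ⟨j, hj'⟩)) ∧
  (∀ (i : ℕ) (hi : i < t.length) (hi' : i < t'.length), ∀ c ∈ I₀,
      (t.get ⟨i, hi⟩ < c ↔ t'.get ⟨i, hi'⟩ < c) ∧
      (t.get ⟨i, hi⟩ = c ↔ t'.get ⟨i, hi'⟩ = c))

/-- The tuples (lists) `c` and `c'` from `N` satisfy the same `L`-formulas with
parameters from `A ⊆ N`. -/
def SameTypeOver (L : FirstOrder.Language.{u, v}) (N : Type w) [L.Structure N]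
    (A : Set N) (c c' : List N) : Prop :=
  ∀ (n k : ℕ) (hc : c.length = n) (hc' : c'.length = n)
    (ψ : L.Formula (Fin n ⊕ Fin k)) (e : Fin k → N), (∀ i, e i ∈ A) →
    (ψ.Realize (Sum.elim (fun i => c.get (Fin.cast hc.symm i)) e) ↔
      ψ.Realize (Sum.elim (fun i => c'.get (Fin.cast hc'.symm i)) e))

/-- The family `b`, assigning to each finite tuple of rationals a finite tuple of
elements of `N`, is ℚ-indiscernible over `A` relative to `I₀`: whenever two finite
sequences of index tuples have blockwise equal lengths and their concatenations have
the same quantifier-free type over `I₀`, the concatenations of the corresponding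
`b`-tuples satisfy the same formulas with parameters from `A`. -/
def QIndiscernibleOver (L : FirstOrder.Language.{u, v}) (N : Type w) [L.Structure N]
    (A : Set N) (I₀ : Finset ℚ) (b : List ℚ → List N) : Prop :=
  ∀ S S' : List (List ℚ),
    List.Forall₂ (fun s s' => s.length = s'.length) S S' →
    SameQfType I₀ S.flatten S'.flatten →
    SameTypeOver L N A ((S.map b).flatten) ((S'.map b).flatten)

/-- Body of the shearing condition, with the elementary extension `N` made explicit.
Here `I₁.sort (· ≤ ·)` is the increasing enumeration `t̄` of `I₁`. -/
def ShearsBody (L : FirstOrder.Language.{u, v}) (M : Type w) [L.Structure M] (A : Set M)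
    (nx ℓ : ℕ) (φ : L.Formula (Fin nx ⊕ Fin ℓ)) (a : Fin ℓ → M)
    (I₀ I₁ : Finset ℚ) (N : Type w) [L.Structure N] : Prop :=
  ∃ (f : M ↪ₑ[L] N) (b : List ℚ → List N),
    -- the length of `b s` depends only on the length of `s`
    (∀ s s' : List ℚ, s.length = s'.length → (b s).length = (b s').length) ∧
    -- (i) ℚ-indiscernibility over `A` relative to `I₀`
    QIndiscernibleOver L N (⇑f '' A) I₀ b ∧
    -- (ii) `b` at the increasing enumeration of `I₁` is `ā`
    b (I₁.sort (· ≤ ·)) = List.ofFn (⇑f ∘ a) ∧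
    -- (iii) finitely many instances of `φ` along tuples with the same qf type over `I₀`
    -- as `t̄` are jointly unsatisfiable
    ∃ (kk : ℕ) (ts : Fin kk → List ℚ) (hlen : ∀ i, (b (ts i)).length = ℓ),
      (∀ i, SameQfType I₀ (I₁.sort (· ≤ ·)) (ts i)) ∧
      ¬ ∃ x : Fin nx → N, ∀ i : Fin kk,
        φ.Realize (Sum.elim x fun j => (b (ts i)).get (Fin.cast (hlen i).symm j))

/-- `φ(x̄; ā)` `(I₀, I₁)`-shears over `A` for the context of the linear order ℚ. -/
def Shears (L : FirstOrder.Language.{u, v}) (M : Type w) [iM : L.Structure M] (A : Set M)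
    (nx ℓ : ℕ) (φ : L.Formula (Fin nx ⊕ Fin ℓ)) (a : Fin ℓ → M)
    (I₀ I₁ : Finset ℚ) : Prop :=
  I₀ ⊆ I₁ ∧
  ∃ (N : Type w) (iN : L.Structure N),
    @ShearsBody L M iM A nx ℓ φ a I₀ I₁ N iN

/-!
Shift the order-indiscernible sequence `(b_q)` witnessing dividing so that `t` is sent to the
index `q₀` of `ā`, and assign to each tuple `s̄` the tuple `b_{s_p}`, where `p` is the position of
`t` in the increasing enumeration of `I₁`. Tuples with the same quantifier-free type over `I₀`
differ by a map that is strictly monotone on their entries, so order-indiscernibility of `b`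
yields ℚ-indiscernibility of the new family. Moving `t` alone inside its cut of `I₀` preserves the
quantifier-free type of `t̄` over `I₀`; the cut is infinite, and the `k`-inconsistency of `φ`
along `b` makes `k` of the moved instances jointly unsatisfiable.
-/

open Language Function

section ListLemmas

variable {α β γ : Type*}

lemma List.eq_of_flatten_eq_of_forall₂_length {S S' : List (List α)}
    (h : List.Forall₂ (fun s s' => s.length = s'.length) S S') (hf : S.flatten = S'.flatten) :
    S = S' := by
  induction h with
  | nil => rfl
  | cons hs _ ih =>
    obtain ⟨rfl, hrest⟩ := List.append_inj hf hs
    rw [ih hrest]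

lemma List.flatten_map_elim (f : α → Option β) (G : β → List γ) (S : List α) :
    (S.map fun s => (f s).elim [] G).flatten = (S.filterMap f).flatMap G := by
  induction S with
  | nil => rfl
  | cons s S ih => cases h : f s <;> simp [h, ih]

lemma List.ofFn_comp_finProdFinEquiv_symm {m n : ℕ} (w : Fin m × Fin n → α) :
    List.ofFn (w ∘ finProdFinEquiv.symm) =
      (List.ofFn fun i => List.ofFn fun j => w (i, j)).flatten := by
  rw [List.ofFn_mul]
  congr! with i j
  rw [Function.comp_apply]
  congr 1
  rw [Equiv.symm_apply_eq]
  ext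
  simp [Nat.mul_comm, Nat.add_comm]

end ListLemmas

section Cuts

variable {α : Type*} [LinearOrder α]

lemma strictMonoOn_update_id {s : Set α} {t u : α}
    (hu : ∀ c ∈ s, (c < t ↔ c < u) ∧ (t < c ↔ u < c)) :
    StrictMonoOn (update id t u) (insert t s) := by
  intro x hx y hy hxy
  by_cases hxt : x = t <;> by_cases hyt : y = t
  · exact absurd (hxt.trans hyt.symm) hxy.ne
  · subst hxt
    simpa [update_of_ne hyt] using (hu y (hy.resolve_left hyt)).2.1 hxy
  · subst hyt
    simpa [update_of_ne hxt] using (hu x (hx.resolve_left hxt)).1.1 hxy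
  · simpa [update_of_ne hxt, update_of_ne hyt] using hxy

lemma Set.Finite.infinite_setOf_same_cut [TopologicalSpace α] [OrderTopology α]
    [DenselyOrdered α] [NoMaxOrder α] {s : Set α} (hs : s.Finite) {t : α} (ht : t ∉ s) :
    {u | ∀ c ∈ s, (c < t ↔ c < u) ∧ (t < c ↔ u < c)}.Infinite := by
  obtain ⟨t', htt', hIco⟩ :=
    exists_Ico_subset_of_mem_nhds (hs.isClosed.isOpen_compl.mem_nhds ht) (exists_gt t)
  refine (Set.Ioo_infinite htt').mono fun u (hu : t < u ∧ u < t') c hc => ?_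
  obtain ⟨htu, hut'⟩ := hu
  have hc' : c ∉ Set.Ico t t' := fun h => hIco h hc
  simp only [Set.mem_Ico, not_and, not_lt] at hc'
  refine ⟨⟨fun h => h.trans htu, fun h => ?_⟩, ⟨fun h => ?_, htu.trans⟩⟩
  · by_contra h'
    exact (h.trans hut').not_ge (hc' (not_lt.mp h'))
  · exact lt_of_lt_of_le hut' (hc' h.le)

end Cuts

lemma sameQfType_map {I₀ : Finset ℚ} {l : List ℚ} {g : ℚ → ℚ}
    (hg : StrictMonoOn g (↑I₀ ∪ {x | x ∈ l})) (hfix : ∀ c ∈ I₀, g c = c) :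
    SameQfType I₀ l (l.map g) := by
  have hl : ∀ (i) (hi : i < l.length), l[i] ∈ (↑I₀ ∪ {x | x ∈ l} : Set ℚ) :=
    fun i hi => Or.inr (List.getElem_mem hi)
  refine ⟨(List.length_map _).symm, fun i j hi hj _ _ => ?_, fun i hi _ c hc => ?_⟩
  · simp only [List.get_eq_getElem, List.getElem_map]
    exact ⟨(hg.lt_iff_lt (hl i hi) (hl j hj)).symm, (hg.injOn.eq_iff (hl i hi) (hl j hj)).symm⟩
  · simp only [List.get_eq_getElem, List.getElem_map]
    rw [← hg.lt_iff_lt (hl i hi) (Or.inl hc), ← hg.injOn.eq_iff (hl i hi) (Or.inl hc), hfix c hc]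
    exact ⟨Iff.rfl, Iff.rfl⟩

lemma exists_strictMonoOn_map_eq_of_sameQfType {I₀ : Finset ℚ} {l l' : List ℚ}
    (h : SameQfType I₀ l l') : ∃ g : ℚ → ℚ, StrictMonoOn g {x | x ∈ l} ∧ l' = l.map g := by
  obtain ⟨hlen, horder, -⟩ := h
  simp only [List.get_eq_getElem] at horder
  set g : ℚ → ℚ := fun x => l'.getD (l.idxOf x) 0
  have hg : ∀ (i) (hi : i < l.length), g l[i] = l'[i]'(hlen ▸ hi) := by
    intro i hi
    have hj : l.idxOf l[i] < l.length := List.idxOf_lt_length_of_mem (List.getElem_mem hi)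
    simp only [g, List.getD_eq_getElem _ _ (hlen ▸ hj)]
    exact (horder _ _ hj hi (hlen ▸ hj) (hlen ▸ hi)).2.mp (List.getElem_idxOf hj)
  refine ⟨g, ?_, List.ext_getElem (by simp [hlen]) fun i hi _ => by simp [hg i (hlen ▸ hi)]⟩
  rintro _ hx _ hy hxy
  obtain ⟨i, hi, rfl⟩ := List.getElem_of_mem hx
  obtain ⟨j, hj, rfl⟩ := List.getElem_of_mem hy
  rw [hg i hi, hg j hj]
  exact (horder i j hi hj (hlen ▸ hi) (hlen ▸ hj)).1.mp hxy

section Indiscernibility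

variable {L : FirstOrder.Language.{u, v}} {N : Type w} [L.Structure N] {A : Set N}

lemma sameTypeOver_ofFn {n : ℕ} {v v' : Fin n → N}
    (h : ∀ (k : ℕ) (ψ : L.Formula (Fin n ⊕ Fin k)) (e : Fin k → N), (∀ i, e i ∈ A) →
      (ψ.Realize (Sum.elim v e) ↔ ψ.Realize (Sum.elim v' e))) :
    SameTypeOver L N A (List.ofFn v) (List.ofFn v') := by
  intro n' k hc _ ψ e he
  obtain rfl : n = n' := by simpa using hc
  simpa using h k ψ e he

namespace OrderIndiscernibleOver

variable {ℓ : ℕ} {b : ℚ → Fin ℓ → N}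

lemma comp_strictMono (hb : OrderIndiscernibleOver L N A ℓ b) {σ : ℚ → ℚ} (hσ : StrictMono σ) :
    OrderIndiscernibleOver L N A ℓ (b ∘ σ) :=
  fun m k ψ e he q q' hq hq' => hb m k ψ e he (σ ∘ q) (σ ∘ q') (hσ.comp hq) (hσ.comp hq')

lemma realize_iff_of_strictMonoOn (hb : OrderIndiscernibleOver L N A ℓ b) {m k : ℕ}
    (ψ : L.Formula ((Fin m × Fin ℓ) ⊕ Fin k)) {e : Fin k → N} (he : ∀ i, e i ∈ A)
    (r : Fin m → ℚ) {g : ℚ → ℚ} (hg : StrictMonoOn g (Set.range r)) :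
    ψ.Realize (Sum.elim (fun p => b (r p.1) p.2) e) ↔
      ψ.Realize (Sum.elim (fun p => b (g (r p.1)) p.2) e) := by
  classical
  -- `r` factors as `q ∘ π` through the increasing enumeration `q` of its range
  let P := Finset.univ.image r
  let q := P.orderEmbOfFin rfl
  have hqr : ∀ v, q v ∈ Set.range r := fun v => by
    obtain ⟨i, -, hi⟩ := Finset.mem_image.mp (P.orderEmbOfFin_mem rfl v)
    exact ⟨i, hi⟩
  let π : Fin m → Fin P.card := fun i =>
    (P.orderIsoOfFin rfl).symm ⟨r i, Finset.mem_image_of_mem r (Finset.mem_univ i)⟩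
  have hqπ : ∀ i, q (π i) = r i := fun i => by
    simp [q, π, ← Finset.coe_orderIsoOfFin_apply]
  have hgq : StrictMono (g ∘ q) := fun v w hvw => hg (hqr v) (hqr w) (q.strictMono hvw)
  have := hb _ k (ψ.relabel (Sum.map (Prod.map π id) id)) e he q (g ∘ q) q.strictMono hgq
  simp only [Formula.realize_relabel] at this
  convert this using 2 <;> funext x <;> rcases x with ⟨i, j⟩ | i <;> simp [hqπ]

lemma sameTypeOver_flatMap_map (hb : OrderIndiscernibleOver L N A ℓ b) (T : List ℚ)
    {g : ℚ → ℚ} (hg : StrictMonoOn g {x | x ∈ T}) :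
    SameTypeOver L N A (T.flatMap fun x => List.ofFn (b x))
      ((T.map g).flatMap fun x => List.ofFn (b x)) := by
  obtain ⟨m, r, rfl⟩ : ∃ (m : ℕ) (r : Fin m → ℚ), T = List.ofFn r :=
    ⟨_, _, (List.ofFn_get T).symm⟩
  simp only [List.map_ofFn, List.flatMap_def, Function.comp_def,
    ← List.ofFn_comp_finProdFinEquiv_symm (fun p : Fin m × Fin ℓ => b (r p.1) p.2),
    ← List.ofFn_comp_finProdFinEquiv_symm (fun p : Fin m × Fin ℓ => b (g (r p.1)) p.2)]
  refine sameTypeOver_ofFn fun k ψ e he => ?_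
  have := hb.realize_iff_of_strictMonoOn (ψ.relabel (Sum.map finProdFinEquiv.symm id)) he r
    (hg.mono fun x hx => by simpa [List.mem_ofFn] using hx)
  rwa [Formula.realize_relabel, Formula.realize_relabel, Sum.elim_comp_map, Sum.elim_comp_map,
    Function.comp_id] at this

end OrderIndiscernibleOver

end Indiscernibility

section CoordFamily

variable {N : Type w} {ℓ : ℕ}

def coordFamily (b : ℚ → Fin ℓ → N) (p : ℕ) (s : List ℚ) : List N :=
  s[p]?.elim [] fun x => List.ofFn (b x)

variable {b : ℚ → Fin ℓ → N} {p : ℕ}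

lemma coordFamily_of_getElem?_eq_some {s : List ℚ} {x : ℚ} (h : s[p]? = some x) :
    coordFamily b p s = List.ofFn (b x) := by
  simp [coordFamily, h]

lemma length_coordFamily_eq {s s' : List ℚ} (h : s.length = s'.length) :
    (coordFamily b p s).length = (coordFamily b p s').length := by
  rcases lt_or_ge p s.length with hp | hp
  · rw [coordFamily_of_getElem?_eq_some (List.getElem?_eq_getElem hp),
      coordFamily_of_getElem?_eq_some (List.getElem?_eq_getElem (h ▸ hp))]
    simp
  · simp [coordFamily, List.getElem?_eq_none hp, List.getElem?_eq_none (h ▸ hp)]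

lemma OrderIndiscernibleOver.qIndiscernibleOver_coordFamily {L : FirstOrder.Language.{u, v}}
    [L.Structure N] {A : Set N} (hb : OrderIndiscernibleOver L N A ℓ b) (I₀ : Finset ℚ) (p : ℕ) :
    QIndiscernibleOver L N A I₀ (coordFamily b p) := by
  intro S S' hlen hqf
  obtain ⟨g, hg, hflat⟩ := exists_strictMonoOn_map_eq_of_sameQfType hqf
  obtain rfl : S.map (List.map g) = S' := by
    refine List.eq_of_flatten_eq_of_forall₂_length ?_ (by rw [hflat, List.map_flatten])
    exact List.forall₂_map_left_iff.mpr (by simpa using hlen)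
  have hsel : (S.map (List.map g)).filterMap (·[p]?) = (S.filterMap (·[p]?)).map g := by
    simp [List.map_filterMap, List.filterMap_map]
  unfold coordFamily
  rw [List.flatten_map_elim, List.flatten_map_elim, hsel]
  refine hb.sameTypeOver_flatMap_map _ (hg.mono fun x hx => ?_)
  obtain ⟨s, hs, hsx⟩ := List.mem_filterMap.mp hx
  exact List.mem_flatten.mpr ⟨s, hs, List.mem_of_getElem? hsx⟩

end CoordFamily

lemma exists_injective_sameQfType_map_update {I₀ : Finset ℚ} {t : ℚ} (ht : t ∉ I₀) {l : List ℚ}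
    (hl : ∀ x ∈ l, x = t ∨ x ∈ I₀) :
    ∃ u : ℕ → ℚ, Injective u ∧ ∀ n, SameQfType I₀ l (l.map (update id t (u n))) := by
  have hC := I₀.finite_toSet.infinite_setOf_same_cut ht
  refine ⟨fun n => hC.natEmbedding _ n, fun m n h => (hC.natEmbedding _).injective (Subtype.ext h),
    fun n => sameQfType_map ?_ fun c hc => update_of_ne (ne_of_mem_of_not_mem hc ht) _ _⟩
  refine (strictMonoOn_update_id (hC.natEmbedding _ n).2).mono ?_
  rintro x (hx | hx)
  · exact Or.inr hx
  · exact hl x hx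

/-- **Corollary 5.8.** If `φ(x̄; ā)` divides over `A` in `M`, then for every finite
`I₀ ⊆ ℚ` and every `t ∈ ℚ \ I₀`, setting `I₁ = I₀ ∪ {t}`, the formula `φ(x̄; ā)`
`(I₀, I₁)`-shears over `A` for the context of the linear order ℚ. -/
theorem dividing_implies_shearing_rat (L : FirstOrder.Language.{u, v}) (M : Type w)
    [L.Structure M] (A : Set M) (nx ℓ : ℕ)
    (φ : L.Formula (Fin nx ⊕ Fin ℓ)) (a : Fin ℓ → M)
    (hdiv : Divides L M A nx ℓ φ a)
    (I₀ : Finset ℚ) (t : ℚ) (ht : t ∉ I₀) :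
    Shears L M A nx ℓ φ a I₀ (insert t I₀) := by
  obtain ⟨k, N, _, f, b, q₀, hb, hbq₀, hincons⟩ := hdiv
  set tl := (insert t I₀).sort (· ≤ ·)
  have hmem : ∀ x, x ∈ tl ↔ x = t ∨ x ∈ I₀ := fun x => by simp [tl]
  obtain ⟨p, hp⟩ : ∃ p, tl[p]? = some t := List.mem_iff_getElem?.mp ((hmem t).mpr (Or.inl rfl))
  obtain ⟨u, hu, hqf⟩ := exists_injective_sameQfType_map_update ht fun x => (hmem x).mp
  let b' := b ∘ (· + (q₀ - t))
  have hb' : OrderIndiscernibleOver L N (f '' A) ℓ b' :=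
    hb.comp_strictMono (strictMono_id.add_const _)
  have hmoved : ∀ n, coordFamily b' p (tl.map (update id t (u n))) = List.ofFn (b' (u n)) :=
    fun n => coordFamily_of_getElem?_eq_some (by simp [hp])
  refine ⟨Finset.subset_insert t I₀, N, _, f, coordFamily b' p, fun s s' => length_coordFamily_eq,
    hb'.qIndiscernibleOver_coordFamily I₀ p, ?_, k, fun i => tl.map (update id t (u i)),
    fun i => by simp [hmoved], fun i => hqf i, ?_⟩
  · rw [coordFamily_of_getElem?_eq_some hp]
    simp [b', hbq₀]
  · rintro ⟨x, hx⟩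
    refine hincons (fun i => u i + (q₀ - t)) (fun i j h => Fin.ext (hu (add_right_cancel h)))
      ⟨x, fun i => ?_⟩
    simpa [hmoved, b'] using hx i
end

section
/- Let G be a triangle-free (K_3-free) simple graph on a vertex type V, and let a⁰, a¹ : ι → V be families of vertices such that a⁰ i is adjacent to a¹ j whenever i ≠ j. Then there do not exist indices i ≠ j and a vertex x such that x is adjacent to all four vertices a⁰ i, a¹ i, a⁰ j, a¹ j. (Hence the family of conditions 'x is a common neighbor of a⁰ i and a¹ i', indexed by i ∈ ι, is 2-inconsistent.) -/
theorem no_common_neighbor_of_two_columns {V ι : Type*} (G : SimpleGraph V)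
    (hG : G.CliqueFree 3) (a0 a1 : ι → V)
    (ha : ∀ i j : ι, i ≠ j → G.Adj (a0 i) (a1 j)) :
    ¬ ∃ (i j : ι) (x : V), i ≠ j ∧
        G.Adj x (a0 i) ∧ G.Adj x (a1 i) ∧ G.Adj x (a0 j) ∧ G.Adj x (a1 j) := by
  rintro ⟨i, j, x, hij, hx_a0i, -, -, hx_a1j⟩
  have h_edge : G.Adj (a0 i) (a1 j) := ha i j hij
  exact G.isIndepSet_neighborSet_of_triangleFree hG x hx_a0i hx_a1j h_edge.ne h_edge
end

section
/- For every n ≥ 2 there exist a countable type V, a K_{n+1}-free simple graph G on V, and an injective map a : Fin n × ℕ → V such that a(s,i) is adjacent to a(t,j) if and only if s ≠ t and i ≠ j, and for every i ∈ ℕ there is a vertex x adjacent to a(s,i) for every s < n. -/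
/-! Take the complement of the rook's graph on `Fin n × ℕ` and give each column `i` a new
apex vertex joined exactly to the vertices of that column. Two vertices of one column are
never adjacent, so a clique through an apex has at most two vertices. On any clique the map
sending `(s, i)` to `some s` and every apex to `none` is injective, so a clique with `n + 1`
vertices would meet every value of `Option (Fin n)`, hence contain an apex; since `n ≥ 2`
this is impossible. -/

open Finset

/-- Vertices `Sum.inl (a, b)` form the tensor product of the complete graphs on `α` and `β`;
`Sum.inr b` is the apex of column `b`. -/
def ColumnApexAdj {α β : Type*} : α × β ⊕ β → α × β ⊕ β → Prop
  | .inl p, .inl q => p.1 ≠ q.1 ∧ p.2 ≠ q.2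
  | .inl p, .inr b => p.2 = b
  | .inr b, .inl p => p.2 = b
  | .inr _, .inr _ => False

def columnApexGraph (α β : Type*) : SimpleGraph (α × β ⊕ β) where
  Adj := ColumnApexAdj
  symm := by
    constructor
    rintro (p | b) (q | c) h
    exacts [⟨h.1.symm, h.2.symm⟩, h, h, h]
  loopless := by
    constructor
    rintro (p | b) h
    exacts [h.1 rfl, h]

namespace columnApexGraph

variable {α β : Type*}

@[simp]
theorem adj_inl_inl {p q : α × β} :
    (columnApexGraph α β).Adj (.inl p) (.inl q) ↔ p.1 ≠ q.1 ∧ p.2 ≠ q.2 :=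
  Iff.rfl

@[simp]
theorem adj_inr_inl {b : β} {p : α × β} :
    (columnApexGraph α β).Adj (.inr b) (.inl p) ↔ p.2 = b :=
  Iff.rfl

theorem card_le_two_of_inr_mem {t : Finset (α × β ⊕ β)}
    (ht : (columnApexGraph α β).IsClique (t : Set (α × β ⊕ β))) {b : β} (hb : .inr b ∈ t) :
    #t ≤ 2 := by
  classical
  suffices #(t.erase (.inr b)) ≤ 1 by
    rw [card_erase_of_mem hb] at this
    omega
  refine card_le_one.2 fun u hu v hv => by_contra fun huv => ?_
  have hbu := ht hb (mem_of_mem_erase hu) (ne_of_mem_erase hu).symm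
  have hbv := ht hb (mem_of_mem_erase hv) (ne_of_mem_erase hv).symm
  have huv := ht (mem_of_mem_erase hu) (mem_of_mem_erase hv) huv
  rcases u with p | c <;> rcases v with q | d
  · exact huv.2 (hbu.trans (Eq.symm hbv))
  · exact hbv
  · exact hbu
  · exact hbu

def rowOrApex : α × β ⊕ β → Option α :=
  Sum.elim (some ∘ Prod.fst) fun _ => none

theorem injOn_rowOrApex {t : Set (α × β ⊕ β)} (ht : (columnApexGraph α β).IsClique t) :
    t.InjOn rowOrApex := by
  intro u hu v hv huv
  by_contra hne
  have hadj := ht hu hv hne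
  rcases u with p | c <;> rcases v with q | d
  · exact hadj.1 (Option.some_injective _ huv)
  · simp [rowOrApex] at huv
  · simp [rowOrApex] at huv
  · exact hadj

theorem cliqueFree [Fintype α] (hα : 2 ≤ Fintype.card α) :
    (columnApexGraph α β).CliqueFree (Fintype.card α + 1) := by
  classical
  intro t ht
  have himage : t.image rowOrApex = univ := by
    apply eq_univ_of_card
    rw [card_image_of_injOn (injOn_rowOrApex ht.isClique), ht.card_eq, Fintype.card_option]
  obtain ⟨v, hv, hfv⟩ := mem_image.1 (himage ▸ mem_univ none : none ∈ t.image rowOrApex)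
  rcases v with p | b
  · simp [rowOrApex] at hfv
  · have := card_le_two_of_inr_mem ht.isClique hv
    rw [ht.card_eq] at this
    omega

end columnApexGraph

theorem exists_KnFree_graph_with_column_neighbors :
    ∀ n : ℕ, 2 ≤ n →
      ∃ (V : Type) (_ : Countable V) (G : SimpleGraph V) (a : Fin n × ℕ → V),
        G.CliqueFree (n + 1) ∧
        Function.Injective a ∧
        (∀ p q : Fin n × ℕ, G.Adj (a p) (a q) ↔ p.1 ≠ q.1 ∧ p.2 ≠ q.2) ∧
        (∀ i : ℕ, ∃ x : V, ∀ s : Fin n, G.Adj x (a (s, i))) := by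
  intro n hn
  have hfree := columnApexGraph.cliqueFree (α := Fin n) (β := ℕ) (by simpa using hn)
  rw [Fintype.card_fin] at hfree
  exact ⟨Fin n × ℕ ⊕ ℕ, inferInstance, columnApexGraph (Fin n) ℕ, Sum.inl, hfree,
    Sum.inl_injective, fun _ _ => columnApexGraph.adj_inl_inl,
    fun i => ⟨.inr i, fun _ => columnApexGraph.adj_inr_inl.2 rfl⟩⟩
end

section
/- Let n > k ≥ 1, let E be a set of (k+1)-element subsets of a type V with no (n+1)-element clique, and let X be any set of k-element subsets of V. On the extended vertex type Option V (with new vertex none, and V embedded via some), let E′ consist of the images of all members of E together with all sets (image of u) ∪ {none} for u ∈ X. Then E′ has an (n+1)-element clique if and only if there exists an n-element clique S of E such that every k-element subset of S belongs to X. -/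
/-! An `(n+1)`-clique of the extension cannot avoid the new vertex, since its trace on `V`
would be an `(n+1)`-clique of `E`. A clique through the new vertex is `none` adjoined to a
clique `S₀` of `E`, and its edges through `none` are the sets `insert none u` for the `k`-subsets
`u` of `S₀`; so it is a clique of the extension iff all these `u` lie in `X`. -/

def IsHClique {V : Type*} (E : Set (Finset V)) (k : ℕ) (S : Finset V) : Prop :=
  ∀ e : Finset V, e ⊆ S → e.card = k + 1 → e ∈ E

open Finset

theorem Finset.image_some_eraseNone_of_notMem {α : Type*} [DecidableEq (Option α)]
    {s : Finset (Option α)} (h : none ∉ s) : s.eraseNone.image some = s := by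
  rw [image_some_eraseNone, erase_eq_of_notMem h]

theorem Finset.insert_none_image_some_eraseNone {α : Type*} [DecidableEq (Option α)]
    {s : Finset (Option α)} (h : none ∈ s) : insert none (s.eraseNone.image some) = s := by
  rw [image_some_eraseNone, insert_erase h]

namespace Hypergraph

variable {V : Type*} [DecidableEq V]

def oneVertexExtension (E X : Set (Finset V)) : Set (Finset (Option V)) :=
  {e | (∃ e₀ ∈ E, e = e₀.image some) ∨ (∃ u ∈ X, e = insert none (u.image some))}

variable {E X : Set (Finset V)} {k : ℕ}

theorem image_some_mem_oneVertexExtension_iff {e : Finset V} :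
    e.image some ∈ oneVertexExtension E X ↔ e ∈ E := by
  refine ⟨?_, fun he => Or.inl ⟨e, he, rfl⟩⟩
  rintro (⟨e₀, he₀, heq⟩ | ⟨u, -, heq⟩)
  · rwa [image_injective (Option.some_injective V) heq]
  · simpa using congrArg (none ∈ ·) heq

theorem insert_none_mem_oneVertexExtension_iff {u : Finset V} :
    insert none (u.image some) ∈ oneVertexExtension E X ↔ u ∈ X := by
  refine ⟨?_, fun hu => Or.inr ⟨u, hu, rfl⟩⟩
  rintro (⟨e₀, -, heq⟩ | ⟨u', hu', heq⟩)
  · simpa using congrArg (none ∈ ·) heq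
  · have : u.image some = u'.image some := by simpa using congrArg (·.erase none) heq
    rwa [image_injective (Option.some_injective V) this]

theorem isHClique_oneVertexExtension_iff {S : Finset (Option V)} :
    IsHClique (oneVertexExtension E X) k S ↔ IsHClique E k S.eraseNone ∧
      (none ∈ S → ∀ u ⊆ S.eraseNone, u.card = k → u ∈ X) := by
  have card_image_some (s : Finset V) : (s.image some).card = s.card :=
    card_image_of_injective s (Option.some_injective V)
  refine ⟨fun hS => ⟨fun e he hcard => ?_, fun hnone u hu hcard => ?_⟩, ?_⟩
  · refine image_some_mem_oneVertexExtension_iff.1 (hS _ ?_ (by rw [card_image_some, hcard]))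
    exact image_subset_iff.2 fun x hx => mem_eraseNone.1 (he hx)
  · refine insert_none_mem_oneVertexExtension_iff.1 (hS _ ?_ ?_)
    · exact insert_subset hnone (image_subset_iff.2 fun x hx => mem_eraseNone.1 (hu hx))
    · rw [card_insert_of_notMem (by simp), card_image_some, hcard]
  · rintro ⟨hE, hX⟩ e he hcard
    have hsub : e.eraseNone ⊆ S.eraseNone := eraseNone.monotone he
    by_cases hnone : none ∈ e
    · rw [← insert_none_image_some_eraseNone hnone]
      refine insert_none_mem_oneVertexExtension_iff.2 (hX (he hnone) _ hsub ?_)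
      rw [card_eraseNone_of_mem hnone, hcard, Nat.add_sub_cancel]
    · rw [← image_some_eraseNone_of_notMem hnone]
      refine image_some_mem_oneVertexExtension_iff.2 (hE _ hsub ?_)
      rw [card_eraseNone_of_not_mem hnone, hcard]

end Hypergraph

open Hypergraph

theorem one_point_extension_clique_criterion_general {V : Type*} [DecidableEq V] (n k : ℕ)
    (E : Set (Finset V))
    (hfree : ¬ ∃ S : Finset V, S.card = n + 1 ∧ IsHClique E k S)
    (X : Set (Finset V))
    (E' : Set (Finset (Option V)))
    (hE'def : E' = {e : Finset (Option V) |
        (∃ e₀ ∈ E, e = e₀.image some) ∨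
        (∃ u ∈ X, e = insert none (u.image some))}) :
    (∃ S : Finset (Option V), S.card = n + 1 ∧ IsHClique E' k S) ↔
      (∃ S₀ : Finset V, S₀.card = n ∧ IsHClique E k S₀ ∧
        ∀ u : Finset V, u ⊆ S₀ → u.card = k → u ∈ X) := by
  change E' = oneVertexExtension E X at hE'def
  subst hE'def
  constructor
  · rintro ⟨S, hcard, hS⟩
    obtain ⟨hE, hX⟩ := isHClique_oneVertexExtension_iff.1 hS
    by_cases hnone : none ∈ S
    · exact ⟨S.eraseNone, by rw [card_eraseNone_of_mem hnone, hcard, Nat.add_sub_cancel], hE,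
        hX hnone⟩
    · exact absurd ⟨S.eraseNone, by rw [card_eraseNone_of_not_mem hnone, hcard], hE⟩ hfree
  · rintro ⟨S₀, hcard, hE, hX⟩
    refine ⟨insertNone S₀, by rw [card_insertNone, hcard], ?_⟩
    rw [isHClique_oneVertexExtension_iff, eraseNone_insertNone]
    exact ⟨hE, fun _ => hX⟩

theorem one_point_extension_clique_criterion {V : Type*} [DecidableEq V] (n k : ℕ)
    (hk : 1 ≤ k) (hkn : k < n)
    (E : Set (Finset V)) (hE : ∀ e ∈ E, e.card = k + 1)
    (hfree : ¬ ∃ S : Finset V, S.card = n + 1 ∧ IsHClique E k S)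
    (X : Set (Finset V)) (hX : ∀ u ∈ X, u.card = k)
    (E' : Set (Finset (Option V)))
    (hE'def : E' = {e : Finset (Option V) |
        (∃ e₀ ∈ E, e = e₀.image some) ∨
        (∃ u ∈ X, e = insert none (u.image some))}) :
    (∃ S : Finset (Option V), S.card = n + 1 ∧ IsHClique E' k S) ↔
      (∃ S₀ : Finset V, S₀.card = n ∧ IsHClique E k S₀ ∧
        ∀ u : Finset V, u ⊆ S₀ → u.card = k → u ∈ X) :=
  one_point_extension_clique_criterion_general n k E hfree X E' hE'def
end

section
/- Let n > k ≥ 1, let E be a set of (k+1)-element subsets of a type V with no (n+1)-element clique, and fix d ∈ V. On the extended vertex type Option V (with new vertex none, and V embedded via some), let E′ consist of the images of all members of E together with all sets (image of u) ∪ {none}, where u ranges over the k-element subsets of V with d ∉ u and u ∪ {d} ∈ E. Then E′ has no (n+1)-element clique. -/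
namespace IsHClique

variable {α β : Type*} {E : Set (Finset α)} {k : ℕ} {S : Finset α}

theorem image [DecidableEq β] {F : Set (Finset β)} {f : α → β} (hS : IsHClique E k S)
    (hf : Set.InjOn f S) (hEF : ∀ e ∈ E, e.image f ∈ F) : IsHClique F k (S.image f) := by
  intro e he hcard
  obtain ⟨e', he'S, rfl⟩ := Finset.subset_image_iff.mp he
  rw [Finset.card_image_of_injOn (hf.mono he'S)] at hcard
  exact hEF e' (hS e' he'S hcard)

theorem exists_edge_mem_mem [DecidableEq α] (hS : IsHClique E k S) (hk : 1 ≤ k)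
    (hkS : k + 1 ≤ S.card) {a b : α} (ha : a ∈ S) (hb : b ∈ S) (hab : a ≠ b) :
    ∃ e ∈ E, a ∈ e ∧ b ∈ e := by
  have hpair : ({a, b} : Finset α).card ≤ k + 1 := by
    rw [Finset.card_pair hab]
    omega
  obtain ⟨e, hab_e, heS, hcard⟩ :=
    Finset.exists_subsuperset_card_eq (Finset.insert_subset ha (by simpa using hb)) hpair hkS
  exact ⟨e, hS e heS hcard, hab_e (by simp), hab_e (by simp)⟩

end IsHClique

section DuplicateVertex

variable {V : Type*} [DecidableEq V]

/-- The hypergraph on `Option V` obtained from `E` by adding a new vertex `none` that copies the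
edges of `d`. -/
def duplicateVertex (E : Set (Finset V)) (k : ℕ) (d : V) : Set (Finset (Option V)) :=
  {e | (∃ e₀ ∈ E, e = e₀.image some) ∨
    (∃ u : Finset V, u.card = k ∧ d ∉ u ∧ insert d u ∈ E ∧ e = insert none (u.image some))}

variable {E : Set (Finset V)} {k : ℕ} {d : V} {e : Finset (Option V)}

theorem image_getD_mem_of_mem_duplicateVertex (he : e ∈ duplicateVertex E k d) :
    e.image (Option.getD · d) ∈ E := by
  rcases he with ⟨e₀, he₀, rfl⟩ | ⟨u, -, -, hu, rfl⟩
  · simpa [Finset.image_image] using he₀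
  · simpa [Finset.image_insert, Finset.image_image] using hu

theorem not_mem_and_mem_of_mem_duplicateVertex (he : e ∈ duplicateVertex E k d) :
    ¬(none ∈ e ∧ some d ∈ e) := by
  rcases he with ⟨e₀, -, rfl⟩ | ⟨u, -, hdu, -, rfl⟩ <;> simp_all

end DuplicateVertex

theorem duplicate_vertex_cliqueFree_general {V : Type*} [DecidableEq V] (n k : ℕ)
    (hk : 1 ≤ k) (hkn : k < n)
    (E : Set (Finset V))
    (hfree : ¬ ∃ S : Finset V, S.card = n + 1 ∧ IsHClique E k S)
    (d : V)
    (E' : Set (Finset (Option V)))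
    (hE'def : E' = {e : Finset (Option V) |
        (∃ e₀ ∈ E, e = e₀.image some) ∨
        (∃ u : Finset V, u.card = k ∧ d ∉ u ∧ insert d u ∈ E ∧
          e = insert none (u.image some))}) :
    ¬ ∃ S : Finset (Option V), S.card = n + 1 ∧ IsHClique E' k S := by
  rintro ⟨S, hcard, hS⟩
  change E' = duplicateVertex E k d at hE'def
  subst hE'def
  have hsplit : ¬(none ∈ S ∧ some d ∈ S) := fun ⟨hnone, hd⟩ => by
    obtain ⟨e, he, hnone_e, hd_e⟩ :=
      hS.exists_edge_mem_mem hk (by omega) hnone hd (Option.some_ne_none d).symm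
    exact not_mem_and_mem_of_mem_duplicateVertex he ⟨hnone_e, hd_e⟩
  have hinj : Set.InjOn (Option.getD · d) S := by
    rintro (_ | a) ha (_ | b) hb hab <;> simp_all
  exact hfree ⟨S.image (Option.getD · d), by rw [Finset.card_image_of_injOn hinj, hcard],
    hS.image hinj fun e he => image_getD_mem_of_mem_duplicateVertex he⟩

theorem duplicate_vertex_cliqueFree {V : Type*} [DecidableEq V] (n k : ℕ)
    (hk : 1 ≤ k) (hkn : k < n)
    (E : Set (Finset V)) (hE : ∀ e ∈ E, e.card = k + 1)
    (hfree : ¬ ∃ S : Finset V, S.card = n + 1 ∧ IsHClique E k S)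
    (d : V)
    (E' : Set (Finset (Option V)))
    (hE'def : E' = {e : Finset (Option V) |
        (∃ e₀ ∈ E, e = e₀.image some) ∨
        (∃ u : Finset V, u.card = k ∧ d ∉ u ∧ insert d u ∈ E ∧
          e = insert none (u.image some))}) :
    ¬ ∃ S : Finset (Option V), S.card = n + 1 ∧ IsHClique E' k S :=
  duplicate_vertex_cliqueFree_general n k hk hkn E hfree d E' hE'def
end

section
/- Let p, m ∈ ℕ, let u : Fin p → ℚ be strictly increasing, and let v, w : Fin m → ℚ be strictly increasing with all values of v and w outside the range of u. Assume: (i) ι(v i) = ι(w i) for every i < m; and (ii) for all i, j < m, if ι(v i) = ι(w j) then v i < w j. Then there exists a strictly increasing z : Fin m → ℚ, with all values outside the ranges of u, v, and w, such that ι(z i) = ι(w i) for every i, and for all i, j < m: (v i < z j ↔ v i < w j) and (z i < w j ↔ v i < w j). -/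
/-! Since `ι = intervalIndex u` is monotone, the hypotheses say exactly that
`v k < w j ↔ ι (v k) ≤ ι (w j)`; hence `v k < w i` and `v i < w j` give `v k < w j`.
For such tuples, `z i` is taken strictly between `A i = max {v k | v k < w i}` and
`B i = min {w l | v i < w l}`: both bounds are monotone in `i`, and interpolating between them
with increasing weights makes `z` strictly increasing. -/

/-- The interval index of `x` relative to the strictly increasing frame `u`: the
number of indices `r` with `u r < x`. -/
def intervalIndex {p : ℕ} (u : Fin p → ℚ) (x : ℚ) : ℕ :=
  (Finset.univ.filter fun r : Fin p => u r < x).card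

open Finset

section Interpolation

variable {α : Type*} [Field α] [LinearOrder α] [IsStrictOrderedRing α] {m : ℕ}

lemma exists_strictMono_between {A B : Fin m → α} (hA : Monotone A) (hB : Monotone B)
    (hAB : ∀ i, A i < B i) : ∃ z : Fin m → α, StrictMono z ∧ ∀ i, A i < z i ∧ z i < B i := by
  set t : Fin m → α := fun i => ((i : ℕ) + 1) / (m + 1)
  have ht_pos : ∀ i, 0 < t i := fun i => by positivity
  have ht_lt_one : ∀ i, t i < 1 := fun i => by
    rw [div_lt_one (by positivity)]
    exact_mod_cast Nat.succ_lt_succ i.isLt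
  have ht : StrictMono t := fun i j hij => by
    apply div_lt_div_of_pos_right _ (by positivity)
    exact_mod_cast Nat.succ_lt_succ hij
  refine ⟨fun i => A i + (B i - A i) * t i, fun i j hij => ?_, fun i => ⟨?_, ?_⟩⟩
  · have := hA hij.le
    have := hB hij.le
    nlinarith [hAB i, ht hij, ht_pos i, ht_lt_one j]
  · nlinarith [hAB i, ht_pos i]
  · nlinarith [hAB i, ht_lt_one i]

lemma exists_strictMono_interpolating {v w : Fin m → α} (hv : Monotone v) (hw : Monotone w)
    (hvw : ∀ i, v i < w i) (htrans : ∀ i j k, v k < w i → v i < w j → v k < w j) :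
    ∃ z : Fin m → α, StrictMono z ∧
      (∀ i j, v i < z j ↔ v i < w j) ∧ (∀ i j, z i < w j ↔ v i < w j) := by
  have hlo : ∀ i, (univ.filter fun k => v k < w i).Nonempty := fun i => ⟨i, by simp [hvw i]⟩
  have hhi : ∀ i, (univ.filter fun l => v i < w l).Nonempty := fun i => ⟨i, by simp [hvw i]⟩
  set A : Fin m → α := fun i => (univ.filter fun k => v k < w i).sup' (hlo i) v
  set B : Fin m → α := fun i => (univ.filter fun l => v i < w l).inf' (hhi i) w
  have le_A : ∀ {k i}, v k < w i → v k ≤ A i := fun h => le_sup' v (by simpa using h)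
  have B_le : ∀ {i l}, v i < w l → B i ≤ w l := fun h => inf'_le w (by simpa using h)
  have hA : Monotone A := fun i j hij =>
    sup'_mono v (fun k hk => by simpa using (by simpa using hk : v k < w i).trans_le (hw hij))
      (hlo i)
  have hB : Monotone B := fun i j hij =>
    inf'_mono w (fun l hl => by simpa using (hv hij).trans_lt (by simpa using hl : v j < w l))
      (hhi j)
  have hAB : ∀ i, A i < B i := fun i => by
    obtain ⟨k, hk, hAk⟩ := exists_mem_eq_sup' (hlo i) v
    obtain ⟨l, hl, hBl⟩ := exists_mem_eq_inf' (hhi i) w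
    simp only [mem_filter, mem_univ, true_and] at hk hl
    simpa only [A, B, hAk, hBl] using htrans i l k hk hl
  obtain ⟨z, hz, hAzB⟩ := exists_strictMono_between hA hB hAB
  refine ⟨z, hz, fun i j => ⟨fun h => ?_, fun h => (le_A h).trans_lt (hAzB j).1⟩,
    fun i j => ⟨fun h => ?_, fun h => (hAzB i).2.trans_le (B_le h)⟩⟩
  · by_contra! hwv
    exact h.not_ge (((hAzB j).2.trans_le (B_le (hvw j))).le.trans hwv)
  · by_contra! hwv
    exact h.not_ge (hwv.trans ((le_A (hvw i)).trans (hAzB i).1.le))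

end Interpolation

lemma intervalIndex_mono {p : ℕ} (u : Fin p → ℚ) : Monotone (intervalIndex u) := fun _ _ h =>
  card_le_card fun r hr => by
    simp only [mem_filter, mem_univ, true_and] at hr ⊢
    exact hr.trans_le h

lemma intervalIndex_lt_of_le_of_lt {p : ℕ} (u : Fin p → ℚ) {x y : ℚ} (r : Fin p)
    (hx : x ≤ u r) (hy : u r < y) : intervalIndex u x < intervalIndex u y := by
  refine card_lt_card ⟨fun s hs => ?_, fun hsub => ?_⟩
  · simp only [mem_filter, mem_univ, true_and] at hs ⊢
    exact hs.trans (hx.trans_lt hy)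
  · have := hsub (by simpa using hy : r ∈ univ.filter fun s => u s < y)
    simp only [mem_filter, mem_univ, true_and] at this
    exact this.not_ge hx

theorem interpolation_lemma_general {p m : ℕ} (u : Fin p → ℚ) (v w : Fin m → ℚ)
    (hv : StrictMono v) (hw : StrictMono w)
    (hidx : ∀ i, intervalIndex u (v i) = intervalIndex u (w i))
    (hvw : ∀ i j, intervalIndex u (v i) = intervalIndex u (w j) → v i < w j) :
    ∃ z : Fin m → ℚ, StrictMono z ∧
      (∀ i, z i ∉ Set.range u) ∧
      (∀ i, z i ∉ Set.range v) ∧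
      (∀ i, z i ∉ Set.range w) ∧
      (∀ i, intervalIndex u (z i) = intervalIndex u (w i)) ∧
      (∀ i j, (v i < z j ↔ v i < w j)) ∧
      (∀ i j, (z i < w j ↔ v i < w j)) := by
  have hlt : ∀ k j, v k < w j ↔ intervalIndex u (v k) ≤ intervalIndex u (w j) := fun k j =>
    ⟨fun h => intervalIndex_mono u h.le,
      fun h => h.eq_or_lt.elim (hvw k j) (intervalIndex_mono u).reflect_lt⟩
  have hvw_self : ∀ i, v i < w i := fun i => hvw i i (hidx i)
  obtain ⟨z, hz, hvz, hzw⟩ := exists_strictMono_interpolating hv.monotone hw.monotone hvw_self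
    fun i j k hki hij => (hlt k j).2 (((hlt k i).1 hki).trans (hidx i ▸ (hlt i j).1 hij))
  have hv_lt_z : ∀ i, v i < z i := fun i => (hvz i i).2 (hvw_self i)
  have hz_lt_w : ∀ i, z i < w i := fun i => (hzw i i).2 (hvw_self i)
  refine ⟨z, hz, ?_, ?_, ?_, fun i => ?_, hvz, hzw⟩
  · rintro i ⟨r, hr⟩
    exact (intervalIndex_lt_of_le_of_lt u r (hr ▸ hv_lt_z i).le (hr ▸ hz_lt_w i)).ne (hidx i)
  · rintro i ⟨k, hk⟩
    have hwv : w i ≤ v k := not_lt.1 fun h => ((hvz k i).2 h).ne hk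
    exact (hz_lt_w i).not_ge (hk ▸ hwv)
  · rintro i ⟨l, hl⟩
    have hwv : w l ≤ v i := not_lt.1 fun h => ((hzw i l).2 h).ne hl.symm
    exact (hv_lt_z i).not_ge (hl ▸ hwv)
  · exact le_antisymm (intervalIndex_mono u (hz_lt_w i).le)
      (hidx i ▸ intervalIndex_mono u (hv_lt_z i).le)

theorem interpolation_lemma {p m : ℕ} (u : Fin p → ℚ) (v w : Fin m → ℚ)
    (hu : StrictMono u) (hv : StrictMono v) (hw : StrictMono w)
    (hvu : ∀ i, v i ∉ Set.range u) (hwu : ∀ i, w i ∉ Set.range u)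
    (hidx : ∀ i, intervalIndex u (v i) = intervalIndex u (w i))
    (hvw : ∀ i j, intervalIndex u (v i) = intervalIndex u (w j) → v i < w j) :
    ∃ z : Fin m → ℚ, StrictMono z ∧
      (∀ i, z i ∉ Set.range u) ∧
      (∀ i, z i ∉ Set.range v) ∧
      (∀ i, z i ∉ Set.range w) ∧
      (∀ i, intervalIndex u (z i) = intervalIndex u (w i)) ∧
      (∀ i j, (v i < z j ↔ v i < w j)) ∧
      (∀ i j, (z i < w j ↔ v i < w j)) :=
  interpolation_lemma_general u v w hv hw hidx hvw
end

section
/- Let Y = {(s,t) ∈ ℚ × ℚ : s < t}. Define relations on Y by: E₁((s,t),(s′,t′)) ↔ s = s′; E₂((s,t),(s′,t′)) ↔ t = t′; and F((s,t),(s′,t′)) ↔ s = t′. Then: E₁ and E₂ are equivalence relations on Y; F is invariant under E₁ in its first argument and under E₂ in its second argument, and induces a well-defined bijection from the quotient Y/E₁ onto the quotient Y/E₂; and F has no fixed point, i.e., there is no (s,t) ∈ Y with F((s,t),(s,t)). -/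
/- The verification from the appendix that the context of infinite linear orders has
property ⊛ (Definition A.1): on Y = {(s,t) ∈ ℚ × ℚ : s < t}, the relations
E₁ = equal first coordinate, E₂ = equal second coordinate are equivalence relations,
and F((s,t),(s′,t′)) ↔ s = t′ induces a fixed-point-free bijection Y/E₁ → Y/E₂. -/

/-- Pairs of rationals in strictly increasing order. -/
def RatPairs : Type := {q : ℚ × ℚ // q.1 < q.2}

/-- `E₁`: equality of first coordinates. -/
def E1 (a b : RatPairs) : Prop := a.1.1 = b.1.1

/-- `E₂`: equality of second coordinates. -/
def E2 (a b : RatPairs) : Prop := a.1.2 = b.1.2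

/-- `F`: the first coordinate of the first pair equals the second coordinate of the
second pair. -/
def Frel (a b : RatPairs) : Prop := a.1.1 = b.1.2

/-- The setoid given by `E₁`. -/
def setoidE1 : Setoid RatPairs :=
  ⟨E1, ⟨fun _ => rfl, fun h => h.symm, fun h h' => h.trans h'⟩⟩

/-- The setoid given by `E₂`. -/
def setoidE2 : Setoid RatPairs :=
  ⟨E2, ⟨fun _ => rfl, fun h => h.symm, fun h h' => h.trans h'⟩⟩

/- Y/E₁ and Y/E₂ are both identified with ℚ, by the first and by the second coordinate (every
rational is the smaller and the larger entry of some pair, as ℚ has no maximum or minimum); under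
these identifications F becomes the identity of ℚ. It has no fixed point because s < t. -/

namespace RatPairs

theorem fst_surjective : Function.Surjective fun a : RatPairs => a.1.1 :=
  fun s => ⟨⟨(s, s + 1), lt_add_one s⟩, rfl⟩

theorem snd_surjective : Function.Surjective fun a : RatPairs => a.1.2 :=
  fun t => ⟨⟨(t - 1, t), sub_one_lt t⟩, rfl⟩

noncomputable def quotientE1Equiv : Quotient setoidE1 ≃ ℚ :=
  Setoid.quotientKerEquivOfSurjective _ fst_surjective

noncomputable def quotientE2Equiv : Quotient setoidE2 ≃ ℚ :=
  Setoid.quotientKerEquivOfSurjective _ snd_surjective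

theorem quotientE1Equiv_mk (a : RatPairs) : quotientE1Equiv (Quotient.mk setoidE1 a) = a.1.1 :=
  rfl

theorem quotientE2Equiv_mk (b : RatPairs) : quotientE2Equiv (Quotient.mk setoidE2 b) = b.1.2 :=
  rfl

theorem frel_congr {a a' b b' : RatPairs} (ha : E1 a a') (hb : E2 b b') :
    Frel a b ↔ Frel a' b' := by
  rw [Frel, Frel, show a.1.1 = a'.1.1 from ha, show b.1.2 = b'.1.2 from hb]

theorem not_frel_self (a : RatPairs) : ¬ Frel a a :=
  a.2.ne

end RatPairs

theorem linear_order_context_has_circle_property :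
    -- E₁ and E₂ are equivalence relations on Y
    Equivalence E1 ∧ Equivalence E2 ∧
    -- F is invariant under E₁ in its first argument, under E₂ in its second
    (∀ a a' b b' : RatPairs, E1 a a' → E2 b b' → (Frel a b ↔ Frel a' b')) ∧
    -- F induces a well-defined bijection from Y/E₁ onto Y/E₂
    (∃ g : Quotient setoidE1 → Quotient setoidE2, Function.Bijective g ∧
      ∀ a b : RatPairs,
        (g (Quotient.mk setoidE1 a) = Quotient.mk setoidE2 b ↔ Frel a b)) ∧
    -- F has no fixed point
    (∀ a : RatPairs, ¬ Frel a a) := by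
  refine ⟨setoidE1.iseqv, setoidE2.iseqv, fun _ _ _ _ => RatPairs.frel_congr,
    ⟨RatPairs.quotientE1Equiv.trans RatPairs.quotientE2Equiv.symm, Equiv.bijective _,
      fun a b => ?_⟩, RatPairs.not_frel_self⟩
  rw [Equiv.trans_apply, RatPairs.quotientE1Equiv_mk, Equiv.symm_apply_eq,
    RatPairs.quotientE2Equiv_mk]
  rfl
end

section
/- Let Y be a set, let E₁ and E₂ be equivalence relations on Y, and let F ⊆ (Y/E₁) × (Y/E₂) be a partial injective function (a functional and injective relation between the quotients). Then there exist a type Z and functions σ₁, σ₂ : Y → Z such that: for each i ∈ {1,2} and all y, y′ ∈ Y, σ_i(y) = σ_i(y′) if and only if y E_i y′; and for all y, y′ ∈ Y, σ₁(y) = σ₂(y′) if and only if F relates [y]_{E₁} to [y′]_{E₂}. -/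
/-!
Take `Z = Y/E₁ ⊕ Y/E₂`. Let `σ₁` send `y` to the left copy of `[y]_{E₁}`, and `σ₂` send `y` to
the left copy of the `E₁`-class matched with `[y]_{E₂}` by `F`, or to the right copy of
`[y]_{E₂}` if it is unmatched. Functionality of `F` makes `σ₂` separate `E₂`-classes, and
injectivity of `F` makes `σ₁ y = σ₂ y'` happen only along `F`.
-/

universe u

section GlueAlong

variable {α β : Type*} (F : α → β → Prop)

open Classical in
noncomputable def glueAlong (b : β) : α ⊕ β :=
  if h : ∃ a, F a b then .inl h.choose else .inr b

variable {F}

theorem glueAlong_injective (hF : Relator.RightUnique F) : Function.Injective (glueAlong F) := by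
  intro b b' h
  unfold glueAlong at h
  split_ifs at h with hb hb'
  · exact hF hb.choose_spec (Sum.inl_injective h ▸ hb'.choose_spec)
  · exact Sum.inr_injective h

theorem inl_eq_glueAlong_iff (hF : Relator.LeftUnique F) {a : α} {b : β} :
    Sum.inl a = glueAlong F b ↔ F a b := by
  unfold glueAlong
  split_ifs with hb
  · exact Sum.inl_injective.eq_iff.trans
      ⟨fun h => h ▸ hb.choose_spec, fun h => hF h hb.choose_spec⟩
  · exact iff_of_false not_false fun h => hb ⟨a, h⟩

end GlueAlong

theorem realize_equality_pattern {Y : Type u} (r₁ r₂ : Y → Y → Prop)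
    (h₁ : Equivalence r₁) (h₂ : Equivalence r₂)
    (F : Quotient (Setoid.mk r₁ h₁) → Quotient (Setoid.mk r₂ h₂) → Prop)
    (hfun : ∀ a b b', F a b → F a b' → b = b')
    (hinj : ∀ a a' b, F a b → F a' b → a = a') :
    ∃ (Z : Type u) (σ₁ σ₂ : Y → Z),
      (∀ y y', σ₁ y = σ₁ y' ↔ r₁ y y') ∧
      (∀ y y', σ₂ y = σ₂ y' ↔ r₂ y y') ∧
      (∀ y y', σ₁ y = σ₂ y' ↔
        F (Quotient.mk (Setoid.mk r₁ h₁) y) (Quotient.mk (Setoid.mk r₂ h₂) y')) := by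
  refine ⟨_, Sum.inl ∘ Quotient.mk _, glueAlong F ∘ Quotient.mk _,
    fun y y' => ?_, fun y y' => ?_, fun y y' => ?_⟩
  · exact Sum.inl_injective.eq_iff.trans Quotient.eq
  · exact (glueAlong_injective fun a b b' => hfun a b b').eq_iff.trans Quotient.eq
  · exact inl_eq_glueAlong_iff fun a a' b => hinj a a' b
end

section
/- Let Y be a set, E₁ and E₂ equivalence relations on Y, and F : Y/E₁ → Y/E₂ a bijection with no fixed point, meaning that F([y]_{E₁}) ≠ [y]_{E₂} for every y ∈ Y. Let Z and σ₁, σ₂ : Y → Z satisfy: σ_i(y) = σ_i(y′) ↔ y E_i y′ for i ∈ {1,2}, and σ₁(y) = σ₂(y′) ↔ F([y]_{E₁}) = [y′]_{E₂}. Then: (a) σ₁(y) ≠ σ₂(y) for every y ∈ Y; (b) for every y ∈ Y there exists y′ ∈ Y with σ₁(y) = σ₂(y′); consequently, for any simple graph G on a vertex type containing Z, for every y ∈ Y there is y′ ∈ Y such that no vertex x satisfies all of: x adjacent to σ₁(y), x not adjacent to σ₂(y), x adjacent to σ₁(y′), and x not adjacent to σ₂(y′). -/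
/-!
Realising `F` by `σ₁, σ₂` turns "no fixed point" into `σ₁ y ≠ σ₂ y`, and since every
`E₂`-class has a representative, every value `σ₁ y` is some `σ₂ y'`. For that `y'` the
conditions for `y` and `y'` together ask a vertex to be both adjacent and non-adjacent to
`σ₁ y = σ₂ y'`.
-/

universe u v w

theorem not_exists_rel_and_not_rel_of_eq {α β : Type*} (R : α → β → Prop) {a b a' b' : β}
    (h : a = b') : ¬ ∃ x, R x a ∧ ¬ R x b ∧ R x a' ∧ ¬ R x b' := by
  rintro ⟨x, hxa, -, -, hxb'⟩
  exact hxb' (h ▸ hxa)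

theorem fixed_point_free_matching_two_inconsistent_general {Y : Type u} {Z : Type v}
    (r₁ r₂ : Y → Y → Prop) (h₁ : Equivalence r₁) (h₂ : Equivalence r₂)
    (F : Quotient (Setoid.mk r₁ h₁) → Quotient (Setoid.mk r₂ h₂))
    (hFnofix : ∀ y : Y,
      F (Quotient.mk (Setoid.mk r₁ h₁) y) ≠ Quotient.mk (Setoid.mk r₂ h₂) y)
    (σ₁ σ₂ : Y → Z)
    (hσF : ∀ y y', σ₁ y = σ₂ y' ↔
      F (Quotient.mk (Setoid.mk r₁ h₁) y) = Quotient.mk (Setoid.mk r₂ h₂) y') :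
    -- (a) the two parameters are always distinct
    (∀ y : Y, σ₁ y ≠ σ₂ y) ∧
    -- (b) every σ₁-value is also a σ₂-value
    (∀ y : Y, ∃ y' : Y, σ₁ y = σ₂ y') ∧
    -- (c) 2-inconsistency in any simple graph on a vertex type containing Z
    (∀ (W : Type w) (G : SimpleGraph W) (e : Z ↪ W),
      ∀ y : Y, ∃ y' : Y,
        ¬ ∃ x : W, G.Adj x (e (σ₁ y)) ∧ ¬ G.Adj x (e (σ₂ y)) ∧
          G.Adj x (e (σ₁ y')) ∧ ¬ G.Adj x (e (σ₂ y'))) := by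
  have hσ₁_mem_range : ∀ y : Y, ∃ y' : Y, σ₁ y = σ₂ y' := fun y =>
    (Quotient.exists_rep (F (Quotient.mk _ y))).imp fun y' hy' => (hσF y y').2 hy'.symm
  refine ⟨fun y h => hFnofix y ((hσF y y).1 h), hσ₁_mem_range, fun W G e y => ?_⟩
  obtain ⟨y', hy'⟩ := hσ₁_mem_range y
  exact ⟨y', not_exists_rel_and_not_rel_of_eq G.Adj (congrArg e hy')⟩

theorem fixed_point_free_matching_two_inconsistent {Y : Type u} {Z : Type v}
    (r₁ r₂ : Y → Y → Prop) (h₁ : Equivalence r₁) (h₂ : Equivalence r₂)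
    (F : Quotient (Setoid.mk r₁ h₁) → Quotient (Setoid.mk r₂ h₂))
    (hFbij : Function.Bijective F)
    (hFnofix : ∀ y : Y,
      F (Quotient.mk (Setoid.mk r₁ h₁) y) ≠ Quotient.mk (Setoid.mk r₂ h₂) y)
    (σ₁ σ₂ : Y → Z)
    (hσ₁ : ∀ y y', σ₁ y = σ₁ y' ↔ r₁ y y')
    (hσ₂ : ∀ y y', σ₂ y = σ₂ y' ↔ r₂ y y')
    (hσF : ∀ y y', σ₁ y = σ₂ y' ↔
      F (Quotient.mk (Setoid.mk r₁ h₁) y) = Quotient.mk (Setoid.mk r₂ h₂) y') :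
    -- (a) the two parameters are always distinct
    (∀ y : Y, σ₁ y ≠ σ₂ y) ∧
    -- (b) every σ₁-value is also a σ₂-value
    (∀ y : Y, ∃ y' : Y, σ₁ y = σ₂ y') ∧
    -- (c) 2-inconsistency in any simple graph on a vertex type containing Z
    (∀ (W : Type w) (G : SimpleGraph W) (e : Z ↪ W),
      ∀ y : Y, ∃ y' : Y,
        ¬ ∃ x : W, G.Adj x (e (σ₁ y)) ∧ ¬ G.Adj x (e (σ₂ y)) ∧
          G.Adj x (e (σ₁ y')) ∧ ¬ G.Adj x (e (σ₂ y'))) :=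
  fixed_point_free_matching_two_inconsistent_general r₁ r₂ h₁ h₂ F hFnofix σ₁ σ₂ hσF
end
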